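/- Let Γ ⊆ ℕ² be a finite set that contains a point of the form (a,0) and a point of the form (0,b), let I ⊆ ℂ[z₁,z₂] be the ideal generated by the monomials with exponents in Γ, let Γ̄ := conv(ℝ≥0² + Γ) ∩ ℕ², and let J ⊆ ℂ[z₁,z₂] be the ideal generated by the monomials with exponents in Γ̄ (so I ⊆ J). Then there exists a constant C > 0 such that for every integer k ≥ 1, 0 ≤ dim_ℂ( ℂ[z₁,z₂]/I^k ) − dim_ℂ( ℂ[z₁,z₂]/J^k ) ≤ C·k. -/

import Mathlib

open Pointwise MeasureTheory

noncomputable section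

/-- The closed first quadrant in `ℝ²`. -/
def quadrant : Set (ℝ × ℝ) := {p | 0 ≤ p.1 ∧ 0 ≤ p.2}

/-- The embedding of `ℕ²` into `ℝ²`. -/
def toR2 (γ : ℕ × ℕ) : ℝ × ℝ := ((γ.1 : ℝ), (γ.2 : ℝ))

/-- The monomial ideal of `ℂ[z₁,z₂]` generated by the monomials with exponents in a set
`S ⊆ ℕ²`. -/
def monomialIdealOfSet (S : Set (ℕ × ℕ)) : Ideal (MvPolynomial (Fin 2) ℂ) :=
  Ideal.span ((fun γ : ℕ × ℕ => MvPolynomial.X 0 ^ γ.1 * MvPolynomial.X 1 ^ γ.2) '' S)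

/-- `Γ̄ := conv(ℝ≥0² + Γ) ∩ ℕ²`, the saturation of the exponent set `Γ`. -/
def saturation (Γ : Finset (ℕ × ℕ)) : Set (ℕ × ℕ) :=
  {γ : ℕ × ℕ | toR2 γ ∈ closure (convexHull ℝ (quadrant + toR2 '' (Γ : Set (ℕ × ℕ))))}

/-!
The colength of a monomial ideal is the number of lattice points outside the upper closure of its
exponent set, and the exponent sets of `I ^ k` and `J ^ k` are the `k`-fold sumsets `k • Γ` and
`k • Γ̄`. A point of `k • Γ̄` lies above `k • p` for some `p ∈ conv Γ`; rounding the barycentric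
coordinates of `k • p` down and putting the lost weight (less than `#Γ`) on `(a, 0)` yields a
point of `k • Γ` at most `#Γ • (a, 0)` above `k • p`. So in each row the lattice points counted
by `I ^ k` but not by `J ^ k` fill a window of width `#Γ * a`, and they occur only in the rows
below `k * b`, because `k • (0, b) ∈ k • Γ`.
-/

namespace MvPolynomial

theorem finrank_quotient_span_monomial {σ K : Type*} [Field K] {S : Set (σ →₀ ℕ)}
    (hS : ((upperClosure S : Set (σ →₀ ℕ))ᶜ).Finite) :
    Module.finrank K (MvPolynomial σ K ⧸ Ideal.span ((fun s => monomial s (1 : K)) '' S)) =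
      ((upperClosure S : Set (σ →₀ ℕ))ᶜ).ncard := by
  classical
  set F := ((upperClosure S : Set (σ →₀ ℕ))ᶜ)
  have := hS.fintype
  let φ : MvPolynomial σ K →ₗ[K] F → K := LinearMap.pi fun m => lcoeff K m.1
  have hφ_apply (p : MvPolynomial σ K) (m : F) : φ p m = coeff m p := rfl
  have hφ : Function.Surjective φ := fun g =>
    ⟨∑ m : F, monomial m.1 (g m), by
      ext m
      simp [hφ_apply, coeff_sum, coeff_monomial, ← Subtype.ext_iff]⟩
  have hker : LinearMap.ker φ =
      (Ideal.span ((fun s => monomial s (1 : K)) '' S)).restrictScalars K := by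
    ext p
    rw [LinearMap.mem_ker, _root_.funext_iff, Submodule.restrictScalars_mem,
      mem_ideal_span_monomial_image]
    simp only [hφ_apply, Pi.zero_apply, Subtype.forall, F, Set.mem_compl_iff, SetLike.mem_coe,
      mem_upperClosure, mem_support_iff]
    exact forall_congr' fun m => not_imp_comm
  rw [← (Submodule.Quotient.restrictScalarsEquiv K _).finrank_eq, ← hker,
    (φ.quotKerEquivOfSurjective hφ).finrank_eq, Module.finrank_fintype_fun_eq_card,
    ← Nat.card_eq_fintype_card, Nat.card_coe_set_eq]

end MvPolynomial

open MvPolynomial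

def prodOrderIsoFinsupp : ℕ × ℕ ≃o (Fin 2 →₀ ℕ) :=
  (Finsupp.orderIsoFunOnFinite.trans (OrderIso.finTwoArrowIso ℕ)).symm

theorem X_pow_mul_X_pow_eq_monomial (γ : ℕ × ℕ) :
    (X 0 ^ γ.1 * X 1 ^ γ.2 : MvPolynomial (Fin 2) ℂ) = monomial (prodOrderIsoFinsupp γ) 1 := by
  simp only [monomial_eq, C_1, one_mul, Finsupp.prod_fintype _ _ fun _ => pow_zero _,
    Fin.prod_univ_two]
  rfl

theorem monomialIdealOfSet_eq_span_monomial (S : Set (ℕ × ℕ)) :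
    monomialIdealOfSet S =
      Ideal.span ((fun s => monomial s (1 : ℂ)) '' (prodOrderIsoFinsupp '' S)) := by
  simp only [monomialIdealOfSet, Set.image_image, X_pow_mul_X_pow_eq_monomial]

theorem finrank_quotient_monomialIdealOfSet {S : Set (ℕ × ℕ)}
    (hS : ((upperClosure S : Set (ℕ × ℕ))ᶜ).Finite) :
    Module.finrank ℂ (MvPolynomial (Fin 2) ℂ ⧸ monomialIdealOfSet S) =
      ((upperClosure S : Set (ℕ × ℕ))ᶜ).ncard := by
  have hcompl : ((upperClosure (prodOrderIsoFinsupp '' S) : Set (Fin 2 →₀ ℕ))ᶜ) =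
      prodOrderIsoFinsupp '' (upperClosure S : Set (ℕ × ℕ))ᶜ := by
    rw [upperClosure_image, UpperSet.coe_map, Set.image_compl_eq prodOrderIsoFinsupp.bijective]
  rw [monomialIdealOfSet_eq_span_monomial,
    finrank_quotient_span_monomial (by rw [hcompl]; exact hS.image _), hcompl,
    Set.ncard_image_of_injective _ prodOrderIsoFinsupp.injective]

theorem monomialIdealOfSet_add (S T : Set (ℕ × ℕ)) :
    monomialIdealOfSet (S + T) = monomialIdealOfSet S * monomialIdealOfSet T := by
  rw [monomialIdealOfSet, monomialIdealOfSet, monomialIdealOfSet, Ideal.span_mul_span',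
    ← Set.image2_mul, Set.image2_image_left, Set.image2_image_right, ← Set.image2_add,
    Set.image_image2]
  congr 2
  funext γ δ
  simp only [Prod.fst_add, Prod.snd_add, pow_add]
  ring

theorem monomialIdealOfSet_nsmul (S : Set (ℕ × ℕ)) (k : ℕ) :
    monomialIdealOfSet (k • S) = monomialIdealOfSet S ^ k := by
  induction k with
  | zero => simp [monomialIdealOfSet, Ideal.one_eq_top]
  | succ k ih => rw [succ_nsmul, pow_succ, monomialIdealOfSet_add, ih]

theorem quadrant_eq_Ici : quadrant = Set.Ici 0 := by
  ext p
  simp [quadrant, Prod.le_def]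

theorem toR2_le_toR2 {x y : ℕ × ℕ} : toR2 x ≤ toR2 y ↔ x ≤ y := by
  simp [toR2, Prod.le_def]

theorem toR2_nonneg (x : ℕ × ℕ) : 0 ≤ toR2 x :=
  ⟨Nat.cast_nonneg _, Nat.cast_nonneg _⟩

theorem toR2_injective : Function.Injective toR2 := fun _ _ h =>
  (toR2_le_toR2.1 h.le).antisymm (toR2_le_toR2.1 h.ge)

theorem toR2_add (x y : ℕ × ℕ) : toR2 (x + y) = toR2 x + toR2 y :=
  Prod.ext (Nat.cast_add _ _) (Nat.cast_add _ _)

theorem toR2_nsmul (n : ℕ) (x : ℕ × ℕ) : toR2 (n • x) = (n : ℝ) • toR2 x :=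
  Prod.ext (by simp [toR2]) (by simp [toR2])

theorem toR2_sum {ι : Type*} (s : Finset ι) (f : ι → ℕ × ℕ) :
    toR2 (∑ i ∈ s, f i) = ∑ i ∈ s, toR2 (f i) :=
  Prod.ext (by simp [toR2, Prod.fst_sum]) (by simp [toR2, Prod.snd_sum])

theorem exists_le_of_mem_saturation {Γ : Finset (ℕ × ℕ)} {γ : ℕ × ℕ} (hγ : γ ∈ saturation Γ) :
    ∃ p ∈ convexHull ℝ (toR2 '' Γ), p ≤ toR2 γ := by
  have hclosed : IsClosed (quadrant + convexHull ℝ (toR2 '' Γ)) := by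
    rw [add_comm, quadrant_eq_Ici]
    exact isClosed_Ici.add_left_of_isCompact ((Γ.finite_toSet.image _).isCompact_convexHull ℝ)
  -- `conv (Q + T) = Q + conv T` is already closed
  rw [saturation, Set.mem_ofPred_eq, convexHull_add, quadrant_eq_Ici,
    (convex_Ici 0).convexHull_eq, ← quadrant_eq_Ici, hclosed.closure_eq] at hγ
  obtain ⟨q, hq, p, hp, hqp⟩ := hγ
  exact ⟨p, hp, hqp ▸ le_add_of_nonneg_left (quadrant_eq_Ici ▸ hq : q ∈ Set.Ici 0)⟩

theorem subset_saturation (Γ : Finset (ℕ × ℕ)) : (Γ : Set (ℕ × ℕ)) ⊆ saturation Γ := fun γ hγ =>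
  subset_closure <| subset_convexHull ℝ _ <| zero_add (toR2 γ) ▸
    Set.add_mem_add (by simp [quadrant]) (Set.mem_image_of_mem toR2 hγ)

theorem exists_smul_le_of_mem_nsmul {K : Set (ℝ × ℝ)} (hK : Convex ℝ K) (hK₀ : K.Nonempty)
    {S : Set (ℕ × ℕ)} (hS : ∀ s ∈ S, ∃ p ∈ K, p ≤ toR2 s) {k : ℕ} {x : ℕ × ℕ}
    (hx : x ∈ k • S) : ∃ p ∈ K, (k : ℝ) • p ≤ toR2 x := by
  induction k generalizing x with
  | zero =>
    obtain ⟨p, hp⟩ := hK₀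
    rw [zero_nsmul, Set.mem_zero] at hx
    exact ⟨p, hp, by rw [hx, Nat.cast_zero, zero_smul]; exact toR2_nonneg 0⟩
  | succ k ih =>
    rw [succ_nsmul, Set.mem_add] at hx
    obtain ⟨y, hy, s, hs, rfl⟩ := hx
    obtain ⟨py, hpy, hpy_le⟩ := ih hy
    obtain ⟨ps, hps, hps_le⟩ := hS s hs
    have : (k : ℝ) • py + (1 : ℝ) • ps ∈ ((k : ℝ) + 1) • K := by
      rw [hK.add_smul (Nat.cast_nonneg k) zero_le_one]
      exact Set.add_mem_add (Set.smul_mem_smul_set hpy) (Set.smul_mem_smul_set hps)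
    obtain ⟨p, hp, hp_eq : ((k : ℝ) + 1) • p = _⟩ := this
    refine ⟨p, hp, ?_⟩
    rw [Nat.cast_succ, hp_eq, one_smul, toR2_add]
    exact add_le_add hpy_le hps_le

theorem Finset.sum_nsmul_mem_nsmul_coe {M : Type*} [AddCommMonoid M] (s : Finset M) (n : M → ℕ) :
    ∑ x ∈ s, n x • x ∈ (∑ x ∈ s, n x) • (s : Set M) := by
  rw [← Finset.sum_nsmul_assoc]
  exact Set.finsetSum_mem_finsetSum _ _ _ fun x hx => Set.nsmul_mem_nsmul hx

/-- Rounding `k` times a convex combination of `Γ` down to an integer combination with weight sum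
`k`; the missing weight, at most `#Γ`, is put on `γ₀`. -/
theorem exists_mem_nsmul_toR2_le {Γ : Finset (ℕ × ℕ)} {γ₀ : ℕ × ℕ} (hγ₀ : γ₀ ∈ Γ)
    {p : ℝ × ℝ} (hp : p ∈ convexHull ℝ (toR2 '' Γ)) (k : ℕ) :
    ∃ s ∈ k • (Γ : Set (ℕ × ℕ)), toR2 s ≤ (k : ℝ) • p + (Γ.card : ℝ) • toR2 γ₀ := by
  obtain ⟨w, hw₀, hw₁, rfl⟩ : ∃ w : ℕ × ℕ → ℝ, (∀ γ ∈ Γ, 0 ≤ w γ) ∧ ∑ γ ∈ Γ, w γ = 1 ∧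
      ∑ γ ∈ Γ, w γ • toR2 γ = p := by
    rw [← Finset.coe_image, Finset.mem_convexHull'] at hp
    obtain ⟨v, hv₀, hv₁, hvp⟩ := hp
    have hinj : Set.InjOn toR2 Γ := toR2_injective.injOn
    refine ⟨v ∘ toR2, fun γ hγ => hv₀ _ (Finset.mem_image_of_mem _ hγ), ?_, ?_⟩
    · rwa [Finset.sum_image hinj] at hv₁
    · rwa [Finset.sum_image hinj] at hvp
  set n : ℕ × ℕ → ℕ := fun γ => ⌊k * w γ⌋₊
  have hkw : ∑ γ ∈ Γ, (k : ℝ) * w γ = k := by rw [← Finset.mul_sum, hw₁, mul_one]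
  have hn_le (γ : ℕ × ℕ) (hγ : γ ∈ Γ) : (n γ : ℝ) ≤ k * w γ :=
    Nat.floor_le (mul_nonneg k.cast_nonneg (hw₀ γ hγ))
  have hsum_le : ∑ γ ∈ Γ, n γ ≤ k := by
    have : ∑ γ ∈ Γ, (n γ : ℝ) ≤ k := hkw ▸ Finset.sum_le_sum hn_le
    exact_mod_cast this
  have hdeficit : k - ∑ γ ∈ Γ, n γ ≤ Γ.card := by
    have : (k : ℝ) ≤ ∑ γ ∈ Γ, (n γ : ℝ) + Γ.card := by
      calc (k : ℝ) = ∑ γ ∈ Γ, (k : ℝ) * w γ := hkw.symm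
        _ ≤ ∑ γ ∈ Γ, ((n γ : ℝ) + 1) :=
          Finset.sum_le_sum fun γ _ => (Nat.lt_floor_add_one _).le
        _ = ∑ γ ∈ Γ, (n γ : ℝ) + Γ.card := by simp [Finset.sum_add_distrib]
    have : k ≤ ∑ γ ∈ Γ, n γ + Γ.card := by exact_mod_cast this
    omega
  refine ⟨∑ γ ∈ Γ, n γ • γ + (k - ∑ γ ∈ Γ, n γ) • γ₀, ?_, ?_⟩
  · convert Set.add_mem_add (Γ.sum_nsmul_mem_nsmul_coe n) (Set.nsmul_mem_nsmul hγ₀) using 1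
    rw [← add_nsmul, Nat.add_sub_cancel' hsum_le]
  · rw [toR2_add, toR2_sum, toR2_nsmul, Finset.smul_sum]
    simp only [toR2_nsmul, smul_smul]
    gcongr with γ hγ
    · exact toR2_nonneg γ
    · exact hn_le γ hγ
    · exact toR2_nonneg γ₀

theorem add_mem_upperClosure_nsmul_of_saturation {Γ : Finset (ℕ × ℕ)} {a : ℕ} (ha : (a, 0) ∈ Γ)
    {k : ℕ} {y : ℕ × ℕ} (hy : y ∈ upperClosure (k • saturation Γ)) :
    y + (Γ.card * a, 0) ∈ upperClosure (k • (Γ : Set (ℕ × ℕ))) := by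
  obtain ⟨x, hx, hxy⟩ := hy
  obtain ⟨p, hp, hpx⟩ := exists_smul_le_of_mem_nsmul (convex_convexHull ℝ _)
    ((Set.image_nonempty.2 ⟨_, ha⟩).convexHull) (fun _ => exists_le_of_mem_saturation) hx
  obtain ⟨s, hs, hsp⟩ := exists_mem_nsmul_toR2_le ha hp k
  refine ⟨s, hs, toR2_le_toR2.1 ?_⟩
  calc toR2 s ≤ (k : ℝ) • p + (Γ.card : ℝ) • toR2 (a, 0) := hsp
    _ ≤ toR2 y + toR2 (Γ.card * a, 0) := by
      gcongr
      · exact hpx.trans (toR2_le_toR2.2 hxy)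
      · simp [toR2]
    _ = toR2 (y + (Γ.card * a, 0)) := (toR2_add _ _).symm

theorem finite_compl_upperClosure {S : Set (ℕ × ℕ)} {a b : ℕ} (ha : (a, 0) ∈ S)
    (hb : (0, b) ∈ S) : ((upperClosure S : Set (ℕ × ℕ))ᶜ).Finite := by
  refine ((Set.finite_Iio a).prod (Set.finite_Iio b)).subset fun x hx => ?_
  simp only [Set.mem_compl_iff, SetLike.mem_coe, mem_upperClosure, not_exists, not_and] at hx
  exact ⟨not_le.1 fun h => hx _ ha ⟨h, Nat.zero_le _⟩, not_le.1 fun h => hx _ hb ⟨Nat.zero_le _, h⟩⟩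

/-- Row `j < N` of `B \ A` lies within `D` of the first point of `B` in that row. -/
theorem ncard_sdiff_le_mul {A B : Set (ℕ × ℕ)} (hA : IsUpperSet A) {N D : ℕ}
    (hshift : ∀ y ∈ B, y + (D, 0) ∈ A) (hrow : ∀ x : ℕ × ℕ, N ≤ x.2 → x ∈ A) :
    (B \ A).ncard ≤ N * D := by
  classical
  let m (j : ℕ) : ℕ := sInf {i | (i, j) ∈ B}
  have hsub : B \ A ⊆ ↑((Finset.range N).biUnion fun j =>
      (Finset.Ico (m j) (m j + D)).image fun i => (i, j)) := by
    rintro ⟨i, j⟩ ⟨hB, hnA⟩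
    have hj : j < N := not_le.1 fun h => hnA (hrow _ h)
    have hmi : m j ≤ i := Nat.sInf_le hB
    have hm : (m j, j) ∈ B := Nat.sInf_mem (s := {i | (i, j) ∈ B}) ⟨i, hB⟩
    have him : i < m j + D := not_le.1 fun h =>
      hnA (hA (show (m j, j) + (D, 0) ≤ (i, j) from ⟨h, (Nat.add_zero j).le⟩) (hshift _ hm))
    simp only [Finset.coe_biUnion, Finset.coe_range, Finset.coe_image, Finset.coe_Ico,
      Set.mem_iUnion, Set.mem_image, Set.mem_Iio, Set.mem_Ico]
    exact ⟨j, hj, i, ⟨hmi, him⟩, rfl⟩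
  calc (B \ A).ncard ≤ _ := Set.ncard_le_ncard hsub (Finset.finite_toSet _)
    _ = _ := Set.ncard_coe_finset _
    _ ≤ (Finset.range N).card * D := Finset.card_biUnion_le_card_mul _ _ _ fun j _ =>
      Finset.card_image_le.trans (by simp)
    _ = N * D := by rw [Finset.card_range]

/-- The colengths of the powers of a monomial ideal and of its integral closure (the
monomial ideal of the saturated exponent set) differ by `O(k)`. -/
theorem dim_integral_closure_diff_linear
    (Γ : Finset (ℕ × ℕ)) (a b : ℕ) (ha : (a, 0) ∈ Γ) (hb : (0, b) ∈ Γ) :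
    monomialIdealOfSet (Γ : Set (ℕ × ℕ)) ≤ monomialIdealOfSet (saturation Γ) ∧
    ∃ C : ℝ, 0 < C ∧ ∀ k : ℕ, 1 ≤ k →
      0 ≤ (Module.finrank ℂ
            (MvPolynomial (Fin 2) ℂ ⧸ (monomialIdealOfSet (Γ : Set (ℕ × ℕ))) ^ k) : ℝ)
          - (Module.finrank ℂ
            (MvPolynomial (Fin 2) ℂ ⧸ (monomialIdealOfSet (saturation Γ)) ^ k) : ℝ) ∧
      (Module.finrank ℂ
            (MvPolynomial (Fin 2) ℂ ⧸ (monomialIdealOfSet (Γ : Set (ℕ × ℕ))) ^ k) : ℝ)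
          - (Module.finrank ℂ
            (MvPolynomial (Fin 2) ℂ ⧸ (monomialIdealOfSet (saturation Γ)) ^ k) : ℝ)
        ≤ C * (k : ℝ) := by
  refine ⟨Ideal.span_mono (Set.image_mono (subset_saturation Γ)), b * (Γ.card * a) + 1,
    by positivity, fun k _ => ?_⟩
  set A := (upperClosure (k • (Γ : Set (ℕ × ℕ))) : Set (ℕ × ℕ))
  set B := (upperClosure (k • saturation Γ) : Set (ℕ × ℕ))
  have hBA : Bᶜ ⊆ Aᶜ := Set.compl_subset_compl.2 <|
    upperClosure_anti (Set.nsmul_subset_nsmul_left (subset_saturation Γ))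
  have hA : Aᶜ.Finite := finite_compl_upperClosure (a := k * a) (b := k * b)
    (by simpa using Set.nsmul_mem_nsmul (n := k) ha)
    (by simpa using Set.nsmul_mem_nsmul (n := k) hb)
  have hcard : (B \ A).ncard ≤ k * b * (Γ.card * a) :=
    ncard_sdiff_le_mul (UpperSet.upper _) (fun _ => add_mem_upperClosure_nsmul_of_saturation ha)
      fun x hx => ⟨k • (0, b), Set.nsmul_mem_nsmul hb, by simpa [Prod.le_def] using hx⟩
  rw [← monomialIdealOfSet_nsmul, ← monomialIdealOfSet_nsmul,
    finrank_quotient_monomialIdealOfSet hA, finrank_quotient_monomialIdealOfSet (hA.subset hBA),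
    ← Nat.cast_sub (Set.ncard_le_ncard hBA hA), ← Set.ncard_sdiff' hBA hA, compl_sdiff_compl]
  refine ⟨Nat.cast_nonneg _, ?_⟩
  calc ((B \ A).ncard : ℝ) ≤ (k * b * (Γ.card * a) : ℕ) := by exact_mod_cast hcard
    _ ≤ (b * (Γ.card * a) + 1) * k := by push_cast; nlinarith
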